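/- (Zero DI capacity in the double-exponential scale for fast fading.) Fix A > 0, σ > 0, a probability measure ν on ℝ with finite second moment, and reals λ₁, λ₂ ≥ 0 with λ₁ + λ₂ < 1. Then for every R > 0 there exists n₀ such that for all n ≥ n₀ the following holds: there do NOT exist M ≥ 2^{2^{nR}} vectors u₁, …, u_M ∈ ℝⁿ with ‖u_i‖² ≤ nA for every i together with decoding-region families D^{(1)}, …, D^{(M)} such that P(u_i, D^{(i)}) ≥ 1 − λ₁ for every i and P(u_i, D^{(j)}) ≤ λ₂ for every ordered pair i ≠ j. In other words, the DI capacity of the fast-fading Gaussian channel in the scale L(n,R) = 2^{2^{nR}} is zero. -/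

import Mathlib

/-!
Acceptance probabilities are Lipschitz in the codeword: shifting the mean of `N(0, σ²)` by `a`
moves the probability of any set by at most `|a| / √(2πσ²)` (the excess mass sits on a strip of
width `|a|` under a density bounded by `1 / √(2πσ²)`), this adds up over the coordinates of
`gaussPi`, and after averaging over the fading it gives
`|P(u, D) - P(u', D)| ≤ E|G| · ‖u - u'‖₁ / √(2πσ²)`.
Codewords of power at most `nA` lie in a cube of side `2√(nA)`; quantizing it with mesh
`κ / n` leaves only `(O(n²))ⁿ = 2^{O(n log n)}` cells, far fewer than `2^{2^{nR}}`, so two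
codewords `uᵢ`, `uⱼ` are `κ`-close in `ℓ¹`. For small `κ` the region `Dⱼ` then accepts `uᵢ` with
probability close to `1 - λ₁ > λ₂`, contradicting the bound on the type II error.
-/

open MeasureTheory ProbabilityTheory

/-- The `n`-fold product of the Gaussian measure `N(0,σ²)` on `ℝ`. -/
noncomputable def gaussPi (n : ℕ) (σ : ℝ) : Measure (Fin n → ℝ) :=
  Measure.pi fun _ => gaussianReal 0 ⟨σ ^ 2, sq_nonneg σ⟩

/-- Acceptance probability of a codeword `u` for the decoding-region family
`D` (indexed by the fading realization `g`) over the fast-fading Gaussian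
channel: `P(u,D) = ∫ P_Z(g∘u + Z ∈ D_g) dν^⊗n(g)`. -/
noncomputable def accProb (n : ℕ) (σ : ℝ) (ν : Measure ℝ)
    (u : Fin n → ℝ) (D : (Fin n → ℝ) → Set (Fin n → ℝ)) : ℝ :=
  ∫ g, (gaussPi n σ {z : Fin n → ℝ | (fun t => g t * u t + z t) ∈ D g}).toReal
    ∂(Measure.pi fun _ : Fin n => ν)

open Real Set Filter
open scoped NNReal

namespace MeasureTheory

theorem abs_measureReal_sub_le_of_le_on {α : Type*} [MeasurableSpace α] {μ ν : Measure α}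
    [IsFiniteMeasure μ] [IsFiniteMeasure ν] (huniv : μ univ = ν univ) {T : Set α}
    (hT : MeasurableSet T) (hle : ∀ s ⊆ T, μ s ≤ ν s) (hge : ∀ s ⊆ Tᶜ, ν s ≤ μ s)
    {S : Set α} (hS : MeasurableSet S) :
    |ν.real S - μ.real S| ≤ ν.real T - μ.real T := by
  have hle' (s) (hs : s ⊆ T) : μ.real s ≤ ν.real s :=
    ENNReal.toReal_mono (by finiteness) (hle s hs)
  have hge' (s) (hs : s ⊆ Tᶜ) : ν.real s ≤ μ.real s :=
    ENNReal.toReal_mono (by finiteness) (hge s hs)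
  have hmass : μ.real T + μ.real Tᶜ = ν.real T + ν.real Tᶜ := by
    rw [measureReal_add_measureReal_compl hT, measureReal_add_measureReal_compl hT,
      measureReal_def, measureReal_def, huniv]
  have h1 := hle' (S ∩ T) inter_subset_right
  have h2 := hge' (S \ T) (sdiff_subset_compl S T)
  have h3 := hle' (T \ S) sdiff_subset
  have h4 := hge' (Tᶜ \ S) sdiff_subset
  have hSμ := measureReal_inter_add_sdiff (μ := μ) (s := S) hT
  have hSν := measureReal_inter_add_sdiff (μ := ν) (s := S) hT
  have hTμ := measureReal_inter_add_sdiff (μ := μ) (s := T) hS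
  have hTν := measureReal_inter_add_sdiff (μ := ν) (s := T) hS
  have hTcμ := measureReal_inter_add_sdiff (μ := μ) (s := Tᶜ) hS
  have hTcν := measureReal_inter_add_sdiff (μ := ν) (s := Tᶜ) hS
  rw [inter_comm] at hTμ hTν
  rw [inter_comm, ← sdiff_eq] at hTcμ hTcν
  rw [abs_le]
  constructor <;> linarith

section Sections

variable {α β : Type*} [MeasurableSpace α] [MeasurableSpace β] {μ : Measure α} {ν : Measure β}

theorem measureReal_prod_eq_integral [IsFiniteMeasure ν] {E : Set (α × β)}
    (hE : MeasurableSet E) : (μ.prod ν).real E = ∫ x, ν.real (Prod.mk x ⁻¹' E) ∂μ := by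
  rw [measureReal_def, Measure.prod_apply hE, ← integral_toReal
    (measurable_measure_prodMk_left hE).aemeasurable (ae_of_all _ fun x => measure_lt_top _ _)]
  rfl

theorem abs_measureReal_prod_sub_le_of_sections [IsProbabilityMeasure μ] [IsFiniteMeasure ν]
    {E E' : Set (α × β)} (hE : MeasurableSet E) (hE' : MeasurableSet E') {C : ℝ}
    (h : ∀ x, |ν.real (Prod.mk x ⁻¹' E) - ν.real (Prod.mk x ⁻¹' E')| ≤ C) :
    |(μ.prod ν).real E - (μ.prod ν).real E'| ≤ C := by
  rw [measureReal_prod_eq_integral hE, measureReal_prod_eq_integral hE',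
    ← integral_sub (Measure.integrable_measure_prodMk_left hE (measure_ne_top _ _))
      (Measure.integrable_measure_prodMk_left hE' (measure_ne_top _ _))]
  simpa using norm_integral_le_of_norm_le_const (μ := μ)
    (f := fun x => ν.real (Prod.mk x ⁻¹' E) - ν.real (Prod.mk x ⁻¹' E')) (ae_of_all _ h)

theorem abs_measureReal_prod_sub_le_of_sections' [IsFiniteMeasure μ] [IsProbabilityMeasure ν]
    {E E' : Set (α × β)} (hE : MeasurableSet E) (hE' : MeasurableSet E') {C : ℝ}
    (h : ∀ y, |μ.real ((·, y) ⁻¹' E) - μ.real ((·, y) ⁻¹' E')| ≤ C) :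
    |(μ.prod ν).real E - (μ.prod ν).real E'| ≤ C := by
  have hswap := Measure.measurePreserving_swap (μ := ν) (ν := μ)
  rw [← hswap.measureReal_preimage hE.nullMeasurableSet,
    ← hswap.measureReal_preimage hE'.nullMeasurableSet]
  exact abs_measureReal_prod_sub_le_of_sections (measurable_swap hE) (measurable_swap hE') h

end Sections

def HasTranslationBound {G : Type*} [MeasurableSpace G] [Add G] (μ : Measure G) (c : G → ℝ) :
    Prop :=
  ∀ a S, MeasurableSet S → |μ.real ((· + a) ⁻¹' S) - μ.real S| ≤ c a

namespace HasTranslationBound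

variable {G H : Type*} [MeasurableSpace G] [MeasurableSpace H] [Add G] [Add H]
  {μ : Measure G} {ν : Measure H} {c c' : G → ℝ} {d : H → ℝ}

theorem mono (h : HasTranslationBound μ c) (hc : ∀ a, c a ≤ c' a) : HasTranslationBound μ c' :=
  fun a S hS => (h a S hS).trans (hc a)

theorem of_measurePreserving (h : HasTranslationBound ν d) (e : G ≃ᵐ H)
    (he : MeasurePreserving e μ ν) (hadd : ∀ x y, e (x + y) = e x + e y) :
    HasTranslationBound μ (d ∘ e) := by
  intro a S hS
  have hreal (T : Set H) : μ.real (e ⁻¹' T) = ν.real T := by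
    rw [measureReal_def, he.measure_preimage_emb e.measurableEmbedding, measureReal_def]
  have hS' : S = e ⁻¹' (e.symm ⁻¹' S) := by ext x; simp
  have hpre : (· + a) ⁻¹' S = e ⁻¹' ((· + e a) ⁻¹' (e.symm ⁻¹' S)) := by
    ext x; simp [← hadd]
  rw [hpre, hreal, hS', hreal, ← hS']
  exact h (e a) _ (e.symm.measurable hS)

theorem prod [MeasurableAdd G] [MeasurableAdd H] [IsProbabilityMeasure μ]
    [IsProbabilityMeasure ν] (hμ : HasTranslationBound μ c) (hν : HasTranslationBound ν d) :
    HasTranslationBound (μ.prod ν) fun p => c p.1 + d p.2 := by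
  intro p E hE
  set F : Set (G × H) := {q | (q.1 + p.1, q.2) ∈ E}
  have hF : MeasurableSet F := ((measurable_fst.add_const _).prodMk measurable_snd) hE
  have hE' : MeasurableSet ((· + p) ⁻¹' E) :=
    ((measurable_fst.add_const p.1).prodMk (measurable_snd.add_const p.2)) hE
  calc |(μ.prod ν).real ((· + p) ⁻¹' E) - (μ.prod ν).real E|
      ≤ |(μ.prod ν).real ((· + p) ⁻¹' E) - (μ.prod ν).real F|
        + |(μ.prod ν).real F - (μ.prod ν).real E| := abs_sub_le _ _ _
    _ ≤ d p.2 + c p.1 := add_le_add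
        (abs_measureReal_prod_sub_le_of_sections hE' hF fun x =>
          hν p.2 _ (measurable_prodMk_left (x := x + p.1) hE))
        (abs_measureReal_prod_sub_le_of_sections' hF hE fun y =>
          hμ p.1 _ (measurable_prodMk_right (y := y) hE))
    _ = c p.1 + d p.2 := add_comm _ _

theorem pi [MeasurableAdd G] [IsProbabilityMeasure μ] (h : HasTranslationBound μ c) :
    ∀ n : ℕ, HasTranslationBound (Measure.pi fun _ : Fin n => μ) fun w => ∑ t, c (w t)
  | 0 => fun a S _ => by
    have : (fun z : Fin 0 → G => z + a) = id := funext fun z => Subsingleton.elim _ _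
    rw [this, preimage_id]
    simp
  | n + 1 => by
    refine ((h.prod (pi h n)).of_measurePreserving
      (MeasurableEquiv.piFinSuccAbove (fun _ => G) 0)
      (measurePreserving_piFinSuccAbove (fun _ => μ) 0) fun x y => rfl).mono fun w => ?_
    simp [Fin.sum_univ_succ, Fin.tail]

end HasTranslationBound

end MeasureTheory

namespace ProbabilityTheory

variable {v : ℝ≥0}

theorem gaussianPDFReal_le_gaussianPDFReal {μ₁ μ₂ x : ℝ} (h : (x - μ₂) ^ 2 ≤ (x - μ₁) ^ 2) :
    gaussianPDFReal μ₁ v x ≤ gaussianPDFReal μ₂ v x := by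
  rw [gaussianPDFReal, gaussianPDFReal]
  gcongr

theorem gaussianPDFReal_le_inv_sqrt (μ x : ℝ) : gaussianPDFReal μ v x ≤ (√(2 * π * v))⁻¹ := by
  rw [gaussianPDFReal]
  refine mul_le_of_le_one_right (by positivity) (exp_le_one_iff.2 ?_)
  exact div_nonpos_of_nonpos_of_nonneg (by nlinarith [sq_nonneg (x - μ)]) (by positivity)

theorem gaussianReal_le_gaussianReal_of_pdf_le (hv : v ≠ 0) {μ₁ μ₂ : ℝ} {s : Set ℝ}
    (h : ∀ x ∈ s, gaussianPDFReal μ₁ v x ≤ gaussianPDFReal μ₂ v x) :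
    gaussianReal μ₁ v s ≤ gaussianReal μ₂ v s := by
  rw [gaussianReal_apply _ hv, gaussianReal_apply _ hv]
  exact setLIntegral_mono (measurable_gaussianPDF _ _) fun x hx =>
    ENNReal.ofReal_le_ofReal (h x hx)

theorem gaussianReal_le_ofReal_mul_volume (hv : v ≠ 0) (μ : ℝ) (s : Set ℝ) :
    gaussianReal μ v s ≤ ENNReal.ofReal (√(2 * π * v))⁻¹ * volume s := by
  rw [gaussianReal_apply _ hv, ← setLIntegral_const]
  exact setLIntegral_mono measurable_const fun x _ =>
    ENNReal.ofReal_le_ofReal (gaussianPDFReal_le_inv_sqrt μ x)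


theorem abs_gaussianReal_add_real_sub_le (hv : v ≠ 0) (μ a : ℝ) {S : Set ℝ}
    (hS : MeasurableSet S) :
    |(gaussianReal (μ + a) v).real S - (gaussianReal μ v).real S| ≤ |a| / √(2 * π * v) := by
  set T : Set ℝ := {x | (x - (μ + a)) ^ 2 ≤ (x - μ) ^ 2}
  have hT : MeasurableSet T := measurableSet_le (by fun_prop) (by fun_prop)
  have hTT : T ⊆ (· + a) ⁻¹' T := by
    intro x hx
    simp only [T, mem_preimage, mem_ofPred_eq] at hx ⊢
    nlinarith
  have hstrip : (· + a) ⁻¹' T \ T ⊆ Icc (μ - |a| / 2) (μ + |a| / 2) := by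
    rintro x ⟨hx, hxT⟩
    simp only [T, mem_preimage, mem_ofPred_eq, not_le] at hx hxT
    constructor <;> cases abs_cases a <;> nlinarith
  calc |(gaussianReal (μ + a) v).real S - (gaussianReal μ v).real S|
      ≤ (gaussianReal (μ + a) v).real T - (gaussianReal μ v).real T :=
        abs_measureReal_sub_le_of_le_on (by simp) hT
          (fun s hs => gaussianReal_le_gaussianReal_of_pdf_le hv fun x hx =>
            gaussianPDFReal_le_gaussianPDFReal (hs hx))
          (fun s hs => gaussianReal_le_gaussianReal_of_pdf_le hv fun x hx =>
            gaussianPDFReal_le_gaussianPDFReal (le_of_not_ge (hs hx)))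
          hS
    _ = (gaussianReal μ v).real ((· + a) ⁻¹' T \ T) := by
        rw [measureReal_sdiff hTT hT, ← gaussianReal_map_add_const,
          map_measureReal_apply (measurable_add_const a) hT]
    _ ≤ (ENNReal.ofReal (√(2 * π * v))⁻¹ * volume (Icc (μ - |a| / 2) (μ + |a| / 2))).toReal :=
        ENNReal.toReal_mono (by simp [ENNReal.mul_eq_top])
          ((measure_mono hstrip).trans (gaussianReal_le_ofReal_mul_volume hv μ _))
    _ = |a| / √(2 * π * v) := by
        rw [Real.volume_Icc, show μ + |a| / 2 - (μ - |a| / 2) = |a| by ring,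
          ← ENNReal.ofReal_mul (by positivity), ENNReal.toReal_ofReal (by positivity),
          inv_mul_eq_div]

theorem hasTranslationBound_gaussianReal (hv : v ≠ 0) (μ : ℝ) :
    HasTranslationBound (gaussianReal μ v) fun a => |a| / √(2 * π * v) := by
  intro a S hS
  rw [← map_measureReal_apply (measurable_add_const a) hS, gaussianReal_map_add_const]
  exact abs_gaussianReal_add_real_sub_le hv μ a hS

end ProbabilityTheory

instance (n : ℕ) (σ : ℝ) : IsProbabilityMeasure (gaussPi n σ) := by
  -- instance search does not unify the subtype literal `⟨σ ^ 2, _⟩` with an `ℝ≥0` argument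
  have := instIsProbabilityMeasureGaussianReal 0 ⟨σ ^ 2, sq_nonneg σ⟩
  unfold gaussPi; infer_instance

theorem hasTranslationBound_gaussPi {σ : ℝ} (hσ : σ ≠ 0) (n : ℕ) :
    HasTranslationBound (gaussPi n σ) fun w => ∑ t, |w t| / √(2 * π * σ ^ 2) := by
  have hv : (⟨σ ^ 2, sq_nonneg σ⟩ : ℝ≥0) ≠ 0 := by
    simpa [← NNReal.coe_ne_zero] using hσ
  have := instIsProbabilityMeasureGaussianReal 0 ⟨σ ^ 2, sq_nonneg σ⟩
  exact (hasTranslationBound_gaussianReal hv 0).pi n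

theorem measurableSet_fadingOutput {n : ℕ} {D : (Fin n → ℝ) → Set (Fin n → ℝ)}
    (hD : MeasurableSet {p : (Fin n → ℝ) × (Fin n → ℝ) | p.2 ∈ D p.1}) (u : Fin n → ℝ) :
    MeasurableSet {p : (Fin n → ℝ) × (Fin n → ℝ) | (fun t => p.1 t * u t + p.2 t) ∈ D p.1} :=
  (measurable_fst.prodMk (g := fun p : (Fin n → ℝ) × (Fin n → ℝ) => fun t => p.1 t * u t + p.2 t)
    (by fun_prop)) hD

theorem abs_accProb_sub_le {n : ℕ} {σ : ℝ} (hσ : σ ≠ 0) {ν : Measure ℝ}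
    [IsProbabilityMeasure ν] (hν : Integrable (fun x => |x|) ν) {D : (Fin n → ℝ) → Set (Fin n → ℝ)}
    (hD : MeasurableSet {p : (Fin n → ℝ) × (Fin n → ℝ) | p.2 ∈ D p.1}) (u u' : Fin n → ℝ) :
    |accProb n σ ν u D - accProb n σ ν u' D|
      ≤ (∑ t, |u t - u' t|) * (∫ x, |x| ∂ν) / √(2 * π * σ ^ 2) := by
  set s := √(2 * π * σ ^ 2)
  set ρ := Measure.pi fun _ : Fin n => ν
  have hint (u : Fin n → ℝ) :
      Integrable (fun g => (gaussPi n σ).real {z | (fun t => g t * u t + z t) ∈ D g}) ρ :=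
    Measure.integrable_measure_prodMk_left (measurableSet_fadingOutput hD u) (measure_ne_top _ _)
  have hterm (t : Fin n) : Integrable (fun g : Fin n → ℝ => |u t - u' t| * |g t|) ρ :=
    (integrable_comp_eval hν).const_mul _
  have hpt (g : Fin n → ℝ) :
      |(gaussPi n σ).real {z | (fun t => g t * u t + z t) ∈ D g}
        - (gaussPi n σ).real {z | (fun t => g t * u' t + z t) ∈ D g}|
        ≤ (∑ t, |u t - u' t| * |g t|) / s := by
    have hshift : {z | (fun t => g t * u t + z t) ∈ D g}
        = (· + fun t => g t * (u t - u' t)) ⁻¹' {z | (fun t => g t * u' t + z t) ∈ D g} := by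
      ext z; simp only [mem_preimage, mem_ofPred_eq, Pi.add_apply]; ring_nf
    rw [hshift]
    refine (hasTranslationBound_gaussPi hσ n _ _
      (measurable_prodMk_left (measurableSet_fadingOutput hD u'))).trans_eq ?_
    rw [Finset.sum_div]
    refine Finset.sum_congr rfl fun t _ => ?_
    rw [abs_mul, mul_comm |g t|]
  calc |accProb n σ ν u D - accProb n σ ν u' D|
      ≤ ∫ g, (∑ t, |u t - u' t| * |g t|) / s ∂ρ := by
        simp only [accProb, ← measureReal_def]
        rw [← integral_sub (hint u) (hint u')]
        exact (abs_integral_le_integral_abs).trans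
          (integral_mono ((hint u).sub (hint u')).abs
            ((integrable_finsetSum _ fun t _ => hterm t).div_const _) hpt)
    _ = (∑ t, |u t - u' t|) * (∫ x, |x| ∂ν) / s := by
        rw [integral_div, integral_finsetSum _ fun t _ => hterm t, Finset.sum_mul]
        simp_rw [integral_const_mul, ρ,
          integral_comp_eval (μ := fun _ : Fin n => ν) (f := fun x : ℝ => |x|) hν.1]

theorem exists_ne_forall_abs_sub_lt {ι κ : Type*} [Fintype ι] [Fintype κ] {B δ : ℝ} (hδ : 0 < δ)
    (u : κ → ι → ℝ) (hu : ∀ i t, |u i t| ≤ B)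
    (hcard : (2 * ⌈B / δ⌉₊ + 1) ^ Fintype.card ι < Fintype.card κ) :
    ∃ i j, i ≠ j ∧ ∀ t, |u i t - u j t| < δ := by
  classical
  set K : ℤ := (⌈B / δ⌉₊ : ℤ)
  have hmaps (i : κ) :
      (fun t => ⌊u i t / δ⌋) ∈ Fintype.piFinset fun _ : ι => Finset.Icc (-K) K := by
    refine Fintype.mem_piFinset.2 fun t => Finset.mem_Icc.2 ?_
    have hK : |u i t / δ| ≤ K := by
      rw [abs_div, abs_of_pos hδ, div_le_iff₀ hδ]
      calc |u i t| ≤ B := hu i t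
        _ ≤ K * δ := by rw [← div_le_iff₀ hδ]; exact_mod_cast Nat.le_ceil _
    obtain ⟨hlo, hhi⟩ := abs_le.1 hK
    exact ⟨Int.le_floor.2 (by exact_mod_cast hlo),
      (Int.floor_le_floor hhi).trans_eq (Int.floor_intCast K)⟩
  have hlt : (Fintype.piFinset fun _ : ι => Finset.Icc (-K) K).card
      < (Finset.univ : Finset κ).card := by
    rw [Fintype.card_piFinset, Finset.prod_const, Int.card_Icc, Finset.card_univ, Finset.card_univ]
    convert hcard using 2
    omega
  obtain ⟨i, -, j, -, hij, heq⟩ :=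
    Finset.exists_ne_map_eq_of_card_lt_of_maps_to hlt fun i _ => hmaps i
  refine ⟨i, j, hij, fun t => ?_⟩
  have h := Int.abs_sub_lt_one_of_floor_eq_floor (congrFun heq t)
  rwa [← sub_div, abs_div, abs_of_pos hδ, div_lt_one hδ] at h

theorem exists_ne_sum_abs_sub_le {n M : ℕ} {A κ : ℝ} (hn : 0 < n) (hκ : 0 < κ)
    (u : Fin M → Fin n → ℝ) (hu : ∀ i, ∑ t, u i t ^ 2 ≤ n * A)
    (hM : ((2 * √A / κ + 3) * n ^ 2) ^ n < (M : ℝ)) :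
    ∃ i j, i ≠ j ∧ ∑ t, |u i t - u j t| ≤ κ := by
  have hn1 : (1 : ℝ) ≤ n := by exact_mod_cast hn
  have hδ : 0 < κ / n := by positivity
  have hB (i : Fin M) (t : Fin n) : |u i t| ≤ √A * n :=
    calc |u i t| ≤ √(n * A) := abs_le_sqrt <|
          (Finset.single_le_sum (fun s _ => sq_nonneg (u i s)) (Finset.mem_univ t)).trans (hu i)
      _ = √A * √n := by rw [sqrt_mul (Nat.cast_nonneg n), mul_comm]
      _ ≤ √A * n := by gcongr; exact (sqrt_le_left (by positivity)).2 (by nlinarith)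
  have hK : ((2 * ⌈√A * n / (κ / n)⌉₊ + 1 : ℕ) : ℝ) ≤ (2 * √A / κ + 3) * n ^ 2 := by
    have hceil := Nat.ceil_lt_add_one (show 0 ≤ √A * n / (κ / n) by positivity)
    have h1 : √A * n / (κ / n) = √A / κ * n ^ 2 := by field_simp
    have h2 : (2 * √A / κ + 3) * n ^ 2 = 2 * (√A / κ * n ^ 2) + 3 * n ^ 2 := by ring
    push_cast
    nlinarith
  obtain ⟨i, j, hij, hclose⟩ := exists_ne_forall_abs_sub_lt hδ u hB <| by
    rw [Fintype.card_fin, Fintype.card_fin]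
    exact_mod_cast (pow_le_pow_left₀ (by positivity) hK n).trans_lt hM
  refine ⟨i, j, hij, ?_⟩
  calc ∑ t, |u i t - u j t| ≤ ∑ _t : Fin n, κ / n := Finset.sum_le_sum fun t _ => (hclose t).le
    _ = κ := by simp [field]

theorem eventually_pow_lt_two_rpow_two_rpow {C R : ℝ} (hC : 0 < C) (hR : 0 < R) :
    ∀ᶠ n : ℕ in atTop, (C * n ^ 2) ^ n < (2 : ℝ) ^ ((2 : ℝ) ^ ((n : ℝ) * R)) := by
  have hlog2 : 0 < log 2 := log_pos one_lt_two
  have hbound := (isLittleO_pow_exp_pos_mul_atTop 3 (mul_pos hR hlog2)).bound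
    (c := log 2 / C) (by positivity)
  filter_upwards [tendsto_natCast_atTop_atTop.eventually hbound, eventually_gt_atTop 0]
    with n hcube hn
  have hn' : (0 : ℝ) < n := by exact_mod_cast hn
  rw [norm_of_nonneg (by positivity), norm_of_nonneg (exp_nonneg _)] at hcube
  calc (C * n ^ 2) ^ n = exp (n * log (C * n ^ 2)) := by
        rw [← log_pow, exp_log (by positivity)]
    _ < exp (C * n ^ 3) := by
        refine exp_lt_exp.2 ?_
        have := log_le_sub_one_of_pos (x := C * n ^ 2) (by positivity)
        nlinarith
    _ ≤ exp (log 2 * 2 ^ ((n : ℝ) * R)) := by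
        refine exp_le_exp.2 ?_
        rw [rpow_def_of_pos two_pos]
        calc C * n ^ 3 ≤ C * (log 2 / C * exp (R * log 2 * n)) := by gcongr
          _ = log 2 * exp (log 2 * (n * R)) := by field_simp
    _ = 2 ^ ((2 : ℝ) ^ ((n : ℝ) * R)) := (rpow_def_of_pos two_pos _).symm

theorem fastFading_DI_doubleExponential_scale_zero_general
    (A σ : ℝ) (hσ : 0 < σ)
    (ν : Measure ℝ) [IsProbabilityMeasure ν]
    (hm : Integrable (fun g : ℝ => g ^ 2) ν)
    (lam₁ lam₂ : ℝ)
    (hlam : lam₁ + lam₂ < 1) (R : ℝ) (hR : 0 < R) :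
    ∃ n₀ : ℕ, ∀ n ≥ n₀,
      ¬ ∃ (M : ℕ) (u : Fin M → (Fin n → ℝ))
          (D : Fin M → ((Fin n → ℝ) → Set (Fin n → ℝ))),
        (2 : ℝ) ^ ((2 : ℝ) ^ ((n : ℝ) * R)) ≤ (M : ℝ) ∧
        (∀ i, ∑ t, u i t ^ 2 ≤ (n : ℝ) * A) ∧
        (∀ i, MeasurableSet {p : (Fin n → ℝ) × (Fin n → ℝ) | p.2 ∈ D i p.1}) ∧
        (∀ i, 1 - lam₁ ≤ accProb n σ ν (u i) (D i)) ∧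
        (∀ i j, i ≠ j → accProb n σ ν (u i) (D j) ≤ lam₂) := by
  have hν : Integrable (fun x => |x|) ν :=
    (((memLp_two_iff_integrable_sq aestronglyMeasurable_id).2 hm).integrable one_le_two).abs
  set L := (∫ x, |x| ∂ν) / √(2 * π * σ ^ 2)
  have hL : 0 ≤ L := div_nonneg (integral_nonneg fun x => abs_nonneg x) (sqrt_nonneg _)
  set κ := (1 - lam₁ - lam₂) / (L + 1)
  have hκ : 0 < κ := div_pos (by linarith) (by linarith)
  have hκL : κ * L < 1 - lam₁ - lam₂ := by
    have hfrac : L / (L + 1) < 1 := (div_lt_one (by linarith)).2 (lt_add_one L)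
    calc κ * L = (1 - lam₁ - lam₂) * (L / (L + 1)) := by ring
      _ < 1 - lam₁ - lam₂ := mul_lt_of_lt_one_right (by linarith) hfrac
  obtain ⟨n₀, hn₀⟩ := eventually_atTop.1 <|
    (eventually_pow_lt_two_rpow_two_rpow (C := 2 * √A / κ + 3) (by positivity) hR).and
      (eventually_gt_atTop 0)
  refine ⟨n₀, fun n hn ⟨M, u, D, hM, hpow, hD, htype₁, htype₂⟩ => ?_⟩
  obtain ⟨hgrowth, hn⟩ := hn₀ n hn
  obtain ⟨i, j, hij, hclose⟩ := exists_ne_sum_abs_sub_le hn hκ u hpow (hgrowth.trans_le hM)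
  have hLip : |accProb n σ ν (u i) (D j) - accProb n σ ν (u j) (D j)| ≤ κ * L := by
    refine (abs_accProb_sub_le hσ.ne' hν (hD j) (u i) (u j)).trans ?_
    rw [mul_div_assoc]
    exact mul_le_mul_of_nonneg_right hclose hL
  linarith [abs_le.1 hLip, htype₁ j, htype₂ i j hij]

/-- Zero DI capacity in the double-exponential scale for fast fading: for
every `R > 0` and all large `n`, there is no deterministic identification code
for the fast-fading Gaussian channel with `M ≥ 2^{2^{nR}}` codewords of power
at most `nA`, type I errors at most `lam₁`, and type II errors at most `lam₂`
(where `lam₁ + lam₂ < 1`). -/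
theorem fastFading_DI_doubleExponential_scale_zero
    (A σ : ℝ) (hA : 0 < A) (hσ : 0 < σ)
    (ν : Measure ℝ) [IsProbabilityMeasure ν]
    (hm : Integrable (fun g : ℝ => g ^ 2) ν)
    (lam₁ lam₂ : ℝ) (hlam₁ : 0 ≤ lam₁) (hlam₂ : 0 ≤ lam₂)
    (hlam : lam₁ + lam₂ < 1) (R : ℝ) (hR : 0 < R) :
    ∃ n₀ : ℕ, ∀ n ≥ n₀,
      ¬ ∃ (M : ℕ) (u : Fin M → (Fin n → ℝ))
          (D : Fin M → ((Fin n → ℝ) → Set (Fin n → ℝ))),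
        (2 : ℝ) ^ ((2 : ℝ) ^ ((n : ℝ) * R)) ≤ (M : ℝ) ∧
        (∀ i, ∑ t, u i t ^ 2 ≤ (n : ℝ) * A) ∧
        (∀ i, MeasurableSet {p : (Fin n → ℝ) × (Fin n → ℝ) | p.2 ∈ D i p.1}) ∧
        (∀ i, 1 - lam₁ ≤ accProb n σ ν (u i) (D i)) ∧
        (∀ i j, i ≠ j → accProb n σ ν (u i) (D j) ≤ lam₂) :=
  fastFading_DI_doubleExponential_scale_zero_general A σ hσ ν hm lam₁ lam₂ hlam R hR
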